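/- arXiv:1910.05254 — 2 statements merged into one kernel-verified Lean document; each statement's English description precedes it below -/
import Mathlib

section
/- If G is a bipartite graph containing no induced subgraph isomorphic to 2P_1+P_3 (the disjoint union of two isolated vertices and a path on three vertices), then ivc(G) = vc(G). -/
open SimpleGraph

/-- `S` is an independent set of `G`. -/
def IsIS {V : Type*} (G : SimpleGraph V) (S : Set V) : Prop :=
  S.Pairwise fun u v => ¬ G.Adj u v

/-- `G` contains no induced subgraph isomorphic to `H`. -/
def HFree {W V : Type*} (H : SimpleGraph W) (G : SimpleGraph V) : Prop :=
  IsEmpty (H ↪g G)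

/-- `G` is bipartite: the vertex set splits into two independent sets. -/
def IsBip {V : Type*} (G : SimpleGraph V) : Prop :=
  ∃ X : Set V, IsIS G X ∧ IsIS G Xᶜ

/-- `S` is a vertex cover of `G`. -/
def IsVC {V : Type*} (G : SimpleGraph V) (S : Finset V) : Prop :=
  ∀ ⦃u v⦄, G.Adj u v → u ∈ S ∨ v ∈ S

/-- minimum size of a vertex cover. -/
noncomputable def vc {V : Type*} (G : SimpleGraph V) : ℕ :=
  sInf {n | ∃ S : Finset V, IsVC G S ∧ S.card = n}

/-- minimum size of an independent vertex cover. -/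
noncomputable def ivc {V : Type*} (G : SimpleGraph V) : ℕ :=
  sInf {n | ∃ S : Finset V, IsVC G S ∧ IsIS G ↑S ∧ S.card = n}

/-- `2P_1 + P_3`: two isolated vertices plus a path on three vertices. -/
def twoP1P3 : SimpleGraph (Fin 2 ⊕ Fin 3) :=
  SimpleGraph.fromRel fun u v =>
    (u = Sum.inr 0 ∧ v = Sum.inr 1) ∨ (u = Sum.inr 1 ∧ v = Sum.inr 2)

/-! Let `X, Xᶜ` be the bipartition and `A ⊆ X`, `B ⊆ Xᶜ` the non-isolated vertices of each side;
both are independent vertex covers. If a vertex cover `S` were smaller than both `A` and `B`, then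
the vertices of `A \ S` would outnumber `S ∩ Xᶜ`, which contains all their neighbours, so two of them,
`x₁, x₂`, share a neighbour `b`; likewise `B \ S` contains two vertices `y₁, y₂`. Since `y₁, y₂, x₁, x₂`
lie outside the cover and `b, y₁, y₂` lie in `Xᶜ`, these five vertices induce `2P_1 + P_3`. -/

section

variable {V : Type*} {G : SimpleGraph V}

lemma IsIS.not_adj {S : Set V} (hS : IsIS G S) {u v : V} (hu : u ∈ S) (hv : v ∈ S) :
    ¬ G.Adj u v :=
  fun huv => hS hu hv huv.ne huv

lemma IsVC.not_adj {S : Finset V} (hS : IsVC G S) {u v : V} (hu : u ∉ S) (hv : v ∉ S) :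
    ¬ G.Adj u v :=
  fun huv => (hS huv).elim hu hv

lemma ivc_le_card {S : Finset V} (hvc : IsVC G S) (his : IsIS G S) : ivc G ≤ S.card :=
  Nat.sInf_le ⟨S, hvc, his, rfl⟩

lemma vc_le_ivc (h : ∃ S : Finset V, IsVC G S ∧ IsIS G S) : vc G ≤ ivc G := by
  obtain ⟨S₀, hvc₀, his₀⟩ := h
  obtain ⟨S, hvc, -, hcard⟩ := Nat.sInf_mem
    (s := {n | ∃ S : Finset V, IsVC G S ∧ IsIS G ↑S ∧ S.card = n}) ⟨S₀.card, S₀, hvc₀, his₀, rfl⟩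
  exact Nat.sInf_le ⟨S, hvc, hcard⟩

lemma exists_isVC_card_eq_vc [Fintype V] (G : SimpleGraph V) :
    ∃ S : Finset V, IsVC G S ∧ S.card = vc G :=
  Nat.sInf_mem (s := {n | ∃ S : Finset V, IsVC G S ∧ S.card = n})
    ⟨_, Finset.univ, fun u _ _ => Or.inl (Finset.mem_univ u), rfl⟩

lemma exists_ivc_coe_eq_inter_support [Finite V] {X : Set V} (hX : IsIS G X) (hXc : IsIS G Xᶜ) :
    ∃ A : Finset V, ↑A = X ∩ G.support ∧ IsVC G A ∧ IsIS G A := by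
  refine ⟨(Set.toFinite (X ∩ G.support)).toFinset, Set.Finite.coe_toFinset _, ?_, ?_⟩
  · intro u v huv
    simp only [Set.Finite.mem_toFinset, Set.mem_inter_iff, mem_support]
    by_cases hu : u ∈ X
    · exact Or.inl ⟨hu, v, huv⟩
    · exact Or.inr ⟨by_contra fun hv => hXc.not_adj hu hv huv, u, huv.symm⟩
  · exact hX.mono (by simp)

lemma IsVC.exists_ne_common_neighbor_of_card_lt {X : Set V} {S A : Finset V} (hS : IsVC G S)
    (hX : IsIS G X) (hA : ↑A ⊆ X ∩ G.support) (hcard : S.card < A.card) :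
    ∃ x₁ x₂ b, x₁ ≠ x₂ ∧ x₁ ∈ X ∧ x₂ ∈ X ∧ x₁ ∉ S ∧ x₂ ∉ S ∧ b ∉ X ∧ G.Adj x₁ b ∧ G.Adj x₂ b := by
  classical
  have hnbr : ∀ a : ↥(A \ S), ∃ b ∈ S.filter (· ∉ X), G.Adj a b := by
    rintro ⟨a, ha⟩
    obtain ⟨haA, haS⟩ := Finset.mem_sdiff.1 ha
    obtain ⟨haX, b, hab⟩ := hA haA
    exact ⟨b, Finset.mem_filter.2 ⟨(hS hab).resolve_left haS, fun hbX => hX.not_adj haX hbX hab⟩,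
      hab⟩
  choose f hfT hadj using hnbr
  have hT : (S.filter (· ∉ X)).card < (A \ S).attach.card := by
    have hsplit := Finset.card_filter_add_card_filter_not (s := S) (· ∈ X)
    have hAS : A ∩ S ⊆ S.filter (· ∈ X) := fun v hv =>
      Finset.mem_filter.2 ⟨(Finset.mem_inter.1 hv).2, (hA (Finset.mem_inter.1 hv).1).1⟩
    have := Finset.card_le_card hAS
    have := Finset.card_sdiff_add_card_inter A S
    rw [Finset.card_attach]
    omega
  obtain ⟨⟨x₁, h₁⟩, -, ⟨x₂, h₂⟩, -, hne, heq⟩ :=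
    Finset.exists_ne_map_eq_of_card_lt_of_maps_to hT fun a _ => hfT a
  obtain ⟨hx₁A, hx₁S⟩ := Finset.mem_sdiff.1 h₁
  obtain ⟨hx₂A, hx₂S⟩ := Finset.mem_sdiff.1 h₂
  refine ⟨x₁, x₂, f ⟨x₁, h₁⟩, fun h => hne (Subtype.ext h), (hA hx₁A).1, (hA hx₂A).1, hx₁S, hx₂S,
    (Finset.mem_filter.1 (hfT _)).2, hadj ⟨x₁, h₁⟩, heq ▸ hadj ⟨x₂, h₂⟩⟩

lemma not_hFree_twoP1P3 {y₁ y₂ x₁ b x₂ : V} (hy : y₁ ≠ y₂) (hx : x₁ ≠ x₂)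
    (h₁ : G.Adj x₁ b) (h₂ : G.Adj x₂ b) (hxx : ¬ G.Adj x₁ x₂) (hyy : ¬ G.Adj y₁ y₂)
    (hyx : ∀ y ∈ ({y₁, y₂} : Set V), ∀ x ∈ ({x₁, b, x₂} : Set V), ¬ G.Adj y x) :
    ¬ HFree twoP1P3 G := by
  simp only [Set.mem_insert_iff, Set.mem_singleton_iff, forall_eq_or_imp, forall_eq] at hyx
  obtain ⟨⟨hy₁x₁, hy₁b, hy₁x₂⟩, hy₂x₁, hy₂b, hy₂x₂⟩ := hyx
  have : x₁ ≠ b := h₁.ne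
  have : x₂ ≠ b := h₂.ne
  have : y₁ ≠ b := by rintro rfl; exact hy₁x₁ h₁.symm
  have : y₂ ≠ b := by rintro rfl; exact hy₂x₁ h₁.symm
  have : y₁ ≠ x₁ := by rintro rfl; exact hy₁b h₁
  have : y₁ ≠ x₂ := by rintro rfl; exact hy₁b h₂
  have : y₂ ≠ x₁ := by rintro rfl; exact hy₂b h₁
  have : y₂ ≠ x₂ := by rintro rfl; exact hy₂b h₂
  refine fun hfree => hfree.false ⟨⟨Sum.elim ![y₁, y₂] ![x₁, b, x₂], ?_⟩, ?_⟩
  · rintro (u | u) (v | v) h <;> fin_cases u <;> fin_cases v <;> simp_all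
  · intro u v
    show G.Adj (Sum.elim ![y₁, y₂] ![x₁, b, x₂] u) (Sum.elim ![y₁, y₂] ![x₁, b, x₂] v) ↔ _
    rcases u with u | u <;> rcases v with v | v <;> fin_cases u <;> fin_cases v <;>
      simp [twoP1P3, h₂.symm, adj_comm, *]

lemma card_le_or_card_le_of_hFree_twoP1P3 {X : Set V} {S A B : Finset V} (hX : IsIS G X)
    (hXc : IsIS G Xᶜ) (hfree : HFree twoP1P3 G) (hS : IsVC G S) (hA : ↑A ⊆ X ∩ G.support)
    (hB : ↑B ⊆ Xᶜ ∩ G.support) : A.card ≤ S.card ∨ B.card ≤ S.card := by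
  by_contra! ⟨hAS, hBS⟩
  obtain ⟨x₁, x₂, b, hx, hx₁, hx₂, hx₁S, hx₂S, hb, h₁, h₂⟩ :=
    hS.exists_ne_common_neighbor_of_card_lt hX hA hAS
  obtain ⟨y₁, y₂, -, hy, hy₁, hy₂, hy₁S, hy₂S, -⟩ :=
    hS.exists_ne_common_neighbor_of_card_lt hXc hB hBS
  refine not_hFree_twoP1P3 hy hx h₁ h₂ (hX.not_adj hx₁ hx₂) (hXc.not_adj hy₁ hy₂) ?_ hfree
  simp only [Set.mem_insert_iff, Set.mem_singleton_iff]
  rintro y (rfl | rfl) x (rfl | rfl | rfl)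
  exacts [hS.not_adj hy₁S hx₁S, hXc.not_adj hy₁ hb, hS.not_adj hy₁S hx₂S,
    hS.not_adj hy₂S hx₁S, hXc.not_adj hy₂ hb, hS.not_adj hy₂S hx₂S]

end

theorem stmt_5 {V : Type*} [Fintype V] (G : SimpleGraph V)
    (hbip : IsBip G) (hfree : HFree twoP1P3 G) : ivc G = vc G := by
  obtain ⟨X, hX, hXc⟩ := hbip
  obtain ⟨A, hA, hAvc, hAis⟩ := exists_ivc_coe_eq_inter_support hX hXc
  obtain ⟨B, hB, hBvc, hBis⟩ := exists_ivc_coe_eq_inter_support hXc (by rwa [compl_compl])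
  obtain ⟨S, hS, hcard⟩ := exists_isVC_card_eq_vc G
  refine le_antisymm ?_ (vc_le_ivc ⟨A, hAvc, hAis⟩)
  rw [← hcard]
  rcases card_le_or_card_le_of_hFree_twoP1P3 hX hXc hfree hS hA.le hB.le with h | h
  · exact (ivc_le_card hAvc hAis).trans h
  · exact (ivc_le_card hBvc hBis).trans h
end

section
/- For r ≥ 4, if G is a bipartite graph with no induced K_{1,r}, then ivc(G) ≤ (r/2)·vc(G) − 1 (equivalently, 2·ivc(G) ≤ r·vc(G) − 2) whenever vc(G) ≥ 1 and no minimum vertex cover is independent; in all cases ivc(G) ≤ (r/2)·vc(G) − 1 or ivc(G) = vc(G). Moreover, the double star D_{r−2,r−2} is a K_{1,r}-free bipartite graph with vc = 2 and ivc = r−1, showing tightness. -/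
open SimpleGraph

/-- The star `K_{1,r}`: one centre adjacent to `r` leaves. -/
def starG (r : ℕ) : SimpleGraph (Unit ⊕ Fin r) :=
  SimpleGraph.fromRel fun u v => ∃ i : Fin r, u = Sum.inl () ∧ v = Sum.inr i

/-- The double star `D_{p,q}`: two adjacent centres, the first with `p` extra
leaves and the second with `q` extra leaves. -/
def doubleStar (p q : ℕ) : SimpleGraph (Unit ⊕ Unit ⊕ Fin p ⊕ Fin q) :=
  SimpleGraph.fromRel fun u v =>
    (u = Sum.inl () ∧ v = Sum.inr (Sum.inl ())) ∨
    (∃ i : Fin p, u = Sum.inl () ∧ v = Sum.inr (Sum.inr (Sum.inl i))) ∨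
    (∃ j : Fin q, u = Sum.inr (Sum.inl ()) ∧ v = Sum.inr (Sum.inr (Sum.inr j)))

-- star adjacency
lemma starG_adj (r : ℕ) (a b : Unit ⊕ Fin r) :
    (starG r).Adj a b ↔ (∃ i, a = Sum.inl () ∧ b = Sum.inr i) ∨
      (∃ i, b = Sum.inl () ∧ a = Sum.inr i) := by
  constructor
  · intro h
    rw [starG, SimpleGraph.fromRel_adj] at h
    rcases h with ⟨-, ⟨i, h1, h2⟩ | ⟨i, h1, h2⟩⟩
    · exact Or.inl ⟨i, h1, h2⟩
    · exact Or.inr ⟨i, h1, h2⟩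
  · intro h
    rw [starG, SimpleGraph.fromRel_adj]
    rcases h with ⟨i, rfl, rfl⟩ | ⟨i, rfl, rfl⟩ <;> simp

-- embedding gives degree lower bound at centre image
lemma deg_ge_of_emb {V : Type*} [Fintype V] (r : ℕ) (G : SimpleGraph V)
    [DecidableRel G.Adj] (f : starG r ↪g G) :
    r ≤ (G.neighborFinset (f (Sum.inl ()))).card := by
  have h : ∀ i : Fin r, f (Sum.inr i) ∈ G.neighborFinset (f (Sum.inl ())) := by
    intro i
    rw [SimpleGraph.mem_neighborFinset]
    exact f.map_rel_iff.2 (by rw [starG_adj]; exact Or.inl ⟨i, rfl, rfl⟩)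
  calc r = (Finset.univ : Finset (Fin r)).card := by simp
    _ ≤ _ := Finset.card_le_card_of_injOn (fun i => f (Sum.inr i))
        (fun i _ => h i) (fun i _ j _ hij => by
          have := f.injective hij; simpa using this)
-- in a bipartite graph with no induced K_{1,r}, all degrees are < r
lemma deg_lt {V : Type*} [Fintype V] (r : ℕ) (G : SimpleGraph V)
    [DecidableRel G.Adj] (X : Set V) (hX : IsIS G X) (hXc : IsIS G Xᶜ)
    (hfree : HFree (starG r) G) (v : V) :
    (G.neighborFinset v).card < r := by
  by_contra h
  push_neg at h
  -- neighbors of v are pairwise nonadjacent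
  have hnb : ∀ a b : V, G.Adj v a → G.Adj v b → a ≠ b → ¬ G.Adj a b := by
    intro a b ha hb hab
    by_cases hv : v ∈ X
    · have ha' : a ∈ Xᶜ := by
        intro haX
        exact hX hv haX (G.ne_of_adj ha) ha
      have hb' : b ∈ Xᶜ := by
        intro hbX
        exact hX hv hbX (G.ne_of_adj hb) hb
      exact hXc ha' hb' hab
    · have ha' : a ∈ X := by
        by_contra haX
        exact hXc hv haX (G.ne_of_adj ha) ha
      have hb' : b ∈ X := by
        by_contra hbX
        exact hXc hv hbX (G.ne_of_adj hb) hb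
      exact hX ha' hb' hab
  obtain ⟨t, hts, htc⟩ := Finset.exists_subset_card_eq h
  let e : Fin r ≃ t := (t.equivFin.trans (finCongr htc)).symm
  have hmem : ∀ i : Fin r, (e i : V) ∈ G.neighborFinset v := fun i => hts (e i).2
  have hadjv : ∀ i : Fin r, G.Adj v (e i) := fun i => by
    have := hmem i; rwa [SimpleGraph.mem_neighborFinset] at this
  have hne : ∀ i : Fin r, (e i : V) ≠ v := fun i => (G.ne_of_adj (hadjv i)).symm
  have einj : ∀ i j : Fin r, (e i : V) = (e j : V) → i = j := by
    intro i j hij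
    exact e.injective (Subtype.ext hij)
  refine hfree.elim ⟨⟨Sum.elim (fun _ => v) (fun i => (e i : V)), ?_⟩, ?_⟩
  · rintro (⟨⟩|i) (⟨⟩|j) hij <;> simp only [Sum.elim_inl, Sum.elim_inr] at hij
    · rfl
    · exact absurd hij.symm (hne j)
    · exact absurd hij (hne i)
    · exact congrArg Sum.inr (einj i j hij)
  · rintro (⟨⟩|i) (⟨⟩|j) <;>
      simp only [Function.Embedding.coeFn_mk, Sum.elim_inl, Sum.elim_inr, starG_adj]
    · simp [G.irrefl]
    · exact iff_of_true (hadjv j) (by simp)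
    · exact iff_of_true (hadjv i).symm (by simp)
    · constructor
      · intro hadj
        exact absurd hadj (by
          by_cases hij : i = j
          · subst hij; exact G.irrefl
          · exact hnb _ _ (hadjv i) (hadjv j) (fun hh => hij (einj i j hh)))
      · rintro (⟨k, h1, -⟩ | ⟨k, h1, -⟩) <;> exact absurd h1 (by simp)
lemma exists_indep_cover {V : Type*} [Fintype V] [DecidableEq V] (r : ℕ)
    (G : SimpleGraph V) [DecidableRel G.Adj] (X : Set V) [DecidablePred (· ∈ X)]
    (hX : IsIS G X) (hXc : IsIS G Xᶜ)
    (hdeg : ∀ v : V, (G.neighborFinset v).card < r)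
    (C : Finset V) (hC : IsVC G C) (u v : V) (hu : u ∈ C) (hv : v ∈ C)
    (hadj : G.Adj u v) (huX : u ∈ X) :
    ∃ S : Finset V, IsVC G S ∧ IsIS G ↑S ∧
      S.card + 1 ≤ (C.filter (· ∈ X)).card + (r - 1) * (C.filter (· ∉ X)).card := by
  set A := C.filter (· ∈ X) with hA
  set B := C.filter (· ∉ X) with hB
  set T := B.biUnion (fun b => G.neighborFinset b) with hT
  -- every neighbour of a vertex of B lies in X
  have hTX : ∀ w ∈ T, w ∈ X := by
    intro w hw
    rw [hT, Finset.mem_biUnion] at hw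
    obtain ⟨b, hb, hwb⟩ := hw
    rw [SimpleGraph.mem_neighborFinset] at hwb
    have hbX : b ∉ X := (Finset.mem_filter.1 hb).2
    by_contra hwX
    exact hXc hbX hwX (G.ne_of_adj hwb) hwb
  have hSX : ∀ w ∈ A ∪ T, w ∈ X := by
    intro w hw
    rcases Finset.mem_union.1 hw with h | h
    · exact (Finset.mem_filter.1 h).2
    · exact hTX w h
  refine ⟨A ∪ T, ?_, ?_, ?_⟩
  · -- vertex cover
    intro p q hpq
    rcases hC hpq with hp | hq
    · by_cases hpX : p ∈ X
      · exact Or.inl (Finset.mem_union_left _ (Finset.mem_filter.2 ⟨hp, hpX⟩))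
      · refine Or.inr (Finset.mem_union_right _ ?_)
        rw [hT, Finset.mem_biUnion]
        exact ⟨p, Finset.mem_filter.2 ⟨hp, hpX⟩, (SimpleGraph.mem_neighborFinset _ _ _).2 hpq⟩
    · by_cases hqX : q ∈ X
      · exact Or.inr (Finset.mem_union_left _ (Finset.mem_filter.2 ⟨hq, hqX⟩))
      · refine Or.inl (Finset.mem_union_right _ ?_)
        rw [hT, Finset.mem_biUnion]
        exact ⟨q, Finset.mem_filter.2 ⟨hq, hqX⟩, (SimpleGraph.mem_neighborFinset _ _ _).2 hpq.symm⟩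
  · -- independent
    exact hX.mono (fun w hw => hSX w hw)
  · -- cardinality
    have hvB : v ∈ B := by
      refine Finset.mem_filter.2 ⟨hv, fun hvX => ?_⟩
      exact hX huX hvX (G.ne_of_adj hadj) hadj
    have huT : u ∈ T := by
      rw [hT, Finset.mem_biUnion]
      exact ⟨v, hvB, (SimpleGraph.mem_neighborFinset _ _ _).2 hadj.symm⟩
    have huA : u ∈ A := Finset.mem_filter.2 ⟨hu, huX⟩
    have hinter : 1 ≤ (A ∩ T).card :=
      Finset.card_pos.2 ⟨u, Finset.mem_inter.2 ⟨huA, huT⟩⟩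
    have hcard : (A ∪ T).card + (A ∩ T).card = A.card + T.card :=
      Finset.card_union_add_card_inter A T
    have hTcard : T.card ≤ (r - 1) * B.card := by
      calc T.card ≤ ∑ b ∈ B, (G.neighborFinset b).card := Finset.card_biUnion_le
        _ ≤ ∑ _b ∈ B, (r - 1) := Finset.sum_le_sum (fun b _ => by
            have := hdeg b; omega)
        _ = (r - 1) * B.card := by rw [Finset.sum_const, smul_eq_mul, mul_comm]
    omega
lemma part1 (r : ℕ) (hr : 4 ≤ r) {V : Type} [Fintype V] (G : SimpleGraph V)
    (hbip : IsBip G) (hfree : HFree (starG r) G) :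
    2 * ivc G + 2 ≤ r * vc G ∨ ivc G = vc G := by
  classical
  obtain ⟨X, hX, hXc⟩ := hbip
  have hdeg : ∀ v : V, (G.neighborFinset v).card < r :=
    deg_lt r G X hX hXc hfree
  -- X (as a finset) is an independent vertex cover
  have hXvc : IsVC G X.toFinset := by
    intro a b hab
    by_cases haX : a ∈ X
    · exact Or.inl (Set.mem_toFinset.2 haX)
    · by_cases hbX : b ∈ X
      · exact Or.inr (Set.mem_toFinset.2 hbX)
      · exact absurd hab (hXc haX hbX (G.ne_of_adj hab))
  have hXis : IsIS G ↑X.toFinset := by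
    have : (↑X.toFinset : Set V) = X := by ext w; simp [Set.mem_toFinset]
    rw [this]; exact hX
  have hivc_ne : {n | ∃ S : Finset V, IsVC G S ∧ IsIS G ↑S ∧ S.card = n}.Nonempty :=
    ⟨_, X.toFinset, hXvc, hXis, rfl⟩
  have hvc_ne : {n | ∃ S : Finset V, IsVC G S ∧ S.card = n}.Nonempty :=
    ⟨_, Finset.univ, fun a b _ => Or.inl (Finset.mem_univ a), rfl⟩
  have h_vc_le_ivc : vc G ≤ ivc G := by
    obtain ⟨S, hS1, _, hS3⟩ := Nat.sInf_mem hivc_ne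
    exact Nat.sInf_le ⟨S, hS1, hS3⟩
  obtain ⟨C, hC, hCcard⟩ := Nat.sInf_mem hvc_ne
  by_cases hCind : IsIS G ↑C
  · right
    exact le_antisymm (Nat.sInf_le ⟨C, hC, hCind, hCcard⟩) h_vc_le_ivc
  · left
    rw [IsIS, Set.Pairwise] at hCind
    push_neg at hCind
    obtain ⟨u, hu, v, hv, huv, hadj⟩ := hCind
    rw [Finset.mem_coe] at hu hv
    -- wlog u ∈ X
    have hkey : ∀ u v : V, u ∈ C → v ∈ C → G.Adj u v → u ∈ X →
        2 * ivc G + 2 ≤ r * vc G := by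
      clear hu hv hadj huv u v
      intro u v hu hv hadj huX
      have hvXc : v ∈ Xᶜ := fun hvX => hX huX hvX (G.ne_of_adj hadj) hadj
      obtain ⟨S₁, hS₁vc, hS₁is, hS₁card⟩ :=
        exists_indep_cover r G X hX hXc hdeg C hC u v hu hv hadj huX
      have hXcc : IsIS G Xᶜᶜ := by rwa [compl_compl]
      obtain ⟨S₂, hS₂vc, hS₂is, hS₂card⟩ :=
        exists_indep_cover r G Xᶜ hXc hXcc hdeg C hC v u hv hu hadj.symm hvXc
      -- match filters
      have hf1 : (C.filter (· ∈ Xᶜ)) = (C.filter (· ∉ X)) := by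
        apply Finset.filter_congr; intro w _; simp [Set.mem_compl_iff]
      have hf2 : (C.filter (· ∉ Xᶜ)) = (C.filter (· ∈ X)) := by
        apply Finset.filter_congr; intro w _; simp [Set.mem_compl_iff]
      rw [hf1, hf2] at hS₂card
      have hsum : (C.filter (· ∈ X)).card + (C.filter (· ∉ X)).card = C.card :=
        Finset.card_filter_add_card_filter_not (fun w => w ∈ X)
      have hi1 : ivc G ≤ S₁.card := Nat.sInf_le ⟨S₁, hS₁vc, hS₁is, rfl⟩
      have hi2 : ivc G ≤ S₂.card := Nat.sInf_le ⟨S₂, hS₂vc, hS₂is, rfl⟩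
      have hkC : C.card = vc G := hCcard
      set a := (C.filter (· ∈ X)).card
      set b := (C.filter (· ∉ X)).card
      have h1 : S₁.card + 1 ≤ a + (r - 1) * b := hS₁card
      have h2 : S₂.card + 1 ≤ b + (r - 1) * a := hS₂card
      have : 2 * ivc G + 2 ≤ (a + (r-1)*b) + (b + (r-1)*a) := by omega
      have hfin : (a + (r-1)*b) + (b + (r-1)*a) = r * (a + b) := by
        have : r - 1 + 1 = r := by omega
        nlinarith [this]
      rw [hfin, hsum, hkC] at this
      exact this
    by_cases huX : u ∈ X
    · exact hkey u v hu hv hadj huX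
    · have hvX : v ∈ X := by
        by_contra hvX
        exact hXc huX hvX huv hadj
      exact hkey v u hv hu hadj.symm hvX
lemma ds_adj (p q : ℕ) (u v : Unit ⊕ Unit ⊕ Fin p ⊕ Fin q) :
    (doubleStar p q).Adj u v ↔
      ((u = Sum.inl () ∧ v = Sum.inr (Sum.inl ())) ∨
       (v = Sum.inl () ∧ u = Sum.inr (Sum.inl ())) ∨
       (∃ i : Fin p, u = Sum.inl () ∧ v = Sum.inr (Sum.inr (Sum.inl i))) ∨
       (∃ i : Fin p, v = Sum.inl () ∧ u = Sum.inr (Sum.inr (Sum.inl i))) ∨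
       (∃ j : Fin q, u = Sum.inr (Sum.inl ()) ∧ v = Sum.inr (Sum.inr (Sum.inr j))) ∨
       (∃ j : Fin q, v = Sum.inr (Sum.inl ()) ∧ u = Sum.inr (Sum.inr (Sum.inr j)))) := by
  rw [doubleStar, SimpleGraph.fromRel_adj]
  constructor
  · rintro ⟨hne, (⟨h1, h2⟩ | ⟨i, h1, h2⟩ | ⟨j, h1, h2⟩) |
      (⟨h1, h2⟩ | ⟨i, h1, h2⟩ | ⟨j, h1, h2⟩)⟩
    · exact Or.inl ⟨h1, h2⟩
    · exact Or.inr (Or.inr (Or.inl ⟨i, h1, h2⟩))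
    · exact Or.inr (Or.inr (Or.inr (Or.inr (Or.inl ⟨j, h1, h2⟩))))
    · exact Or.inr (Or.inl ⟨h1, h2⟩)
    · exact Or.inr (Or.inr (Or.inr (Or.inl ⟨i, h1, h2⟩)))
    · exact Or.inr (Or.inr (Or.inr (Or.inr (Or.inr ⟨j, h1, h2⟩))))
  · rintro (⟨rfl, rfl⟩ | ⟨rfl, rfl⟩ | ⟨i, rfl, rfl⟩ | ⟨i, rfl, rfl⟩ |
      ⟨j, rfl, rfl⟩ | ⟨j, rfl, rfl⟩)
    · exact ⟨by simp, Or.inl (Or.inl ⟨rfl, rfl⟩)⟩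
    · exact ⟨by simp, Or.inr (Or.inl ⟨rfl, rfl⟩)⟩
    · exact ⟨by simp, Or.inl (Or.inr (Or.inl ⟨i, rfl, rfl⟩))⟩
    · exact ⟨by simp, Or.inr (Or.inr (Or.inl ⟨i, rfl, rfl⟩))⟩
    · exact ⟨by simp, Or.inl (Or.inr (Or.inr ⟨j, rfl, rfl⟩))⟩
    · exact ⟨by simp, Or.inr (Or.inr (Or.inr ⟨j, rfl, rfl⟩))⟩
lemma ds_deg (p : ℕ) [DecidableRel (doubleStar p p).Adj]
    (v : Unit ⊕ Unit ⊕ Fin p ⊕ Fin p) :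
    ((doubleStar p p).neighborFinset v).card ≤ p + 1 := by
  rcases v with u | u | i | j
  · obtain ⟨⟩ := u
    show ((doubleStar p p).neighborFinset (Sum.inl ())).card ≤ p + 1
    have hsub : (doubleStar p p).neighborFinset (Sum.inl ()) ⊆
        insert (Sum.inr (Sum.inl ()))
          (Finset.univ.image fun i : Fin p => Sum.inr (Sum.inr (Sum.inl i))) := by
      intro w hw
      rw [SimpleGraph.mem_neighborFinset, ds_adj] at hw
      rcases hw with ⟨-, rfl⟩ | ⟨-, h⟩ | ⟨i, -, rfl⟩ | ⟨i, -, h⟩ | ⟨j, h, -⟩ | ⟨j, -, h⟩ <;>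
        simp_all
    have h1 := Finset.card_le_card hsub
    have h2 := Finset.card_insert_le (Sum.inr (Sum.inl ()) :
        Unit ⊕ Unit ⊕ Fin p ⊕ Fin p)
        (Finset.univ.image fun i : Fin p => Sum.inr (Sum.inr (Sum.inl i)))
    have h3 := Finset.card_image_le (s := (Finset.univ : Finset (Fin p)))
        (f := fun i : Fin p => (Sum.inr (Sum.inr (Sum.inl i)) :
          Unit ⊕ Unit ⊕ Fin p ⊕ Fin p))
    simp only [Finset.card_univ, Fintype.card_fin] at h3
    omega
  · obtain ⟨⟩ := u
    show ((doubleStar p p).neighborFinset (Sum.inr (Sum.inl ()))).card ≤ p + 1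
    have hsub : (doubleStar p p).neighborFinset (Sum.inr (Sum.inl ())) ⊆
        insert (Sum.inl ())
          (Finset.univ.image fun j : Fin p => Sum.inr (Sum.inr (Sum.inr j))) := by
      intro w hw
      rw [SimpleGraph.mem_neighborFinset, ds_adj] at hw
      rcases hw with ⟨h, -⟩ | ⟨rfl, -⟩ | ⟨i, h, -⟩ | ⟨i, rfl, -⟩ | ⟨j, -, rfl⟩ | ⟨j, -, h⟩ <;>
        simp_all
    have h1 := Finset.card_le_card hsub
    have h2 := Finset.card_insert_le (Sum.inl () : Unit ⊕ Unit ⊕ Fin p ⊕ Fin p)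
        (Finset.univ.image fun j : Fin p => Sum.inr (Sum.inr (Sum.inr j)))
    have h3 := Finset.card_image_le (s := (Finset.univ : Finset (Fin p)))
        (f := fun j : Fin p => (Sum.inr (Sum.inr (Sum.inr j)) :
          Unit ⊕ Unit ⊕ Fin p ⊕ Fin p))
    simp only [Finset.card_univ, Fintype.card_fin] at h3
    omega
  · have hsub : (doubleStar p p).neighborFinset (Sum.inr (Sum.inr (Sum.inl i))) ⊆
        {Sum.inl ()} := by
      intro w hw
      rw [SimpleGraph.mem_neighborFinset, ds_adj] at hw
      rcases hw with ⟨h, -⟩ | ⟨-, h⟩ | ⟨i', h, -⟩ | ⟨i', rfl, -⟩ | ⟨j, h, -⟩ | ⟨j, -, h⟩ <;>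
        simp_all
    have h1 := Finset.card_le_card hsub
    simp only [Finset.card_singleton] at h1
    omega
  · have hsub : (doubleStar p p).neighborFinset (Sum.inr (Sum.inr (Sum.inr j))) ⊆
        {Sum.inr (Sum.inl ())} := by
      intro w hw
      rw [SimpleGraph.mem_neighborFinset, ds_adj] at hw
      rcases hw with ⟨h, -⟩ | ⟨-, h⟩ | ⟨i', h, -⟩ | ⟨i', -, h⟩ | ⟨j', h, -⟩ | ⟨j', rfl, -⟩ <;>
        simp_all
    have h1 := Finset.card_le_card hsub
    simp only [Finset.card_singleton] at h1
    omega
lemma ds_free (r p : ℕ) (h : p + 2 ≤ r) : HFree (starG r) (doubleStar p p) := by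
  haveI : DecidableRel (doubleStar p p).Adj := Classical.decRel _
  constructor
  intro f
  have h1 := deg_ge_of_emb r (doubleStar p p) f
  have h2 := ds_deg p (f (Sum.inl ()))
  omega

lemma ds_bip (p q : ℕ) : IsBip (doubleStar p q) := by
  refine ⟨{w | w = Sum.inl () ∨ ∃ j : Fin q, w = Sum.inr (Sum.inr (Sum.inr j))}, ?_, ?_⟩
  · intro a ha b hb hne hadj
    rw [ds_adj] at hadj
    simp only [Set.mem_setOf_eq] at ha hb
    rcases hadj with ⟨h1, h2⟩ | ⟨h1, h2⟩ | ⟨i, h1, h2⟩ | ⟨i, h1, h2⟩ |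
      ⟨j, h1, h2⟩ | ⟨j, h1, h2⟩ <;> subst h1 <;> subst h2 <;> simp_all
  · intro a ha b hb hne hadj
    rw [ds_adj] at hadj
    simp only [Set.mem_compl_iff, Set.mem_setOf_eq, not_or] at ha hb
    rcases hadj with ⟨h1, h2⟩ | ⟨h1, h2⟩ | ⟨i, h1, h2⟩ | ⟨i, h1, h2⟩ |
      ⟨j, h1, h2⟩ | ⟨j, h1, h2⟩ <;> subst h1 <;> subst h2 <;> simp_all

lemma ds_vc (p : ℕ) (hp : 1 ≤ p) : vc (doubleStar p p) = 2 := by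
  classical
  have hex : ∃ i : Fin p, True := ⟨⟨0, hp⟩, trivial⟩
  obtain ⟨i0, -⟩ := hex
  have hmem : IsVC (doubleStar p p) {Sum.inl (), Sum.inr (Sum.inl ())} := by
    intro a b hab
    rw [ds_adj] at hab
    rcases hab with ⟨rfl, -⟩ | ⟨rfl, -⟩ | ⟨i, rfl, -⟩ | ⟨i, rfl, -⟩ |
      ⟨j, rfl, -⟩ | ⟨j, rfl, -⟩ <;> simp
  have hcard : ({Sum.inl (), Sum.inr (Sum.inl ())} :
      Finset (Unit ⊕ Unit ⊕ Fin p ⊕ Fin p)).card = 2 := by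
    rw [Finset.card_insert_of_notMem (by simp), Finset.card_singleton]
  have hle : vc (doubleStar p p) ≤ 2 := Nat.sInf_le ⟨_, hmem, hcard⟩
  have hge : 2 ≤ vc (doubleStar p p) := by
    have hne : {n | ∃ S, IsVC (doubleStar p p) S ∧ S.card = n}.Nonempty :=
      ⟨_, _, hmem, hcard⟩
    obtain ⟨S, hS, hScard⟩ := Nat.sInf_mem hne
    rw [show vc (doubleStar p p) = sInf {n | ∃ S, IsVC (doubleStar p p) S ∧ S.card = n} from rfl,
      ← hScard]
    have e1 : (doubleStar p p).Adj (Sum.inl ()) (Sum.inr (Sum.inr (Sum.inl i0))) := by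
      rw [ds_adj]; exact Or.inr (Or.inr (Or.inl ⟨i0, rfl, rfl⟩))
    have e2 : (doubleStar p p).Adj (Sum.inr (Sum.inl ())) (Sum.inr (Sum.inr (Sum.inr i0))) := by
      rw [ds_adj]; exact Or.inr (Or.inr (Or.inr (Or.inr (Or.inl ⟨i0, rfl, rfl⟩))))
    obtain hu | hu := hS e1 <;> obtain hw | hw := hS e2 <;>
      exact Finset.one_lt_card.2 ⟨_, hu, _, hw, by simp⟩
  omega
lemma ds_ivc (p : ℕ) : ivc (doubleStar p p) = p + 1 := by
  classical
  set D := doubleStar p p with hD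
  have adjXY : D.Adj (Sum.inl ()) (Sum.inr (Sum.inl ())) := by
    rw [hD, ds_adj]; exact Or.inl ⟨rfl, rfl⟩
  have adjXA : ∀ i : Fin p, D.Adj (Sum.inl ()) (Sum.inr (Sum.inr (Sum.inl i))) := by
    intro i; rw [hD, ds_adj]; exact Or.inr (Or.inr (Or.inl ⟨i, rfl, rfl⟩))
  have adjYB : ∀ j : Fin p, D.Adj (Sum.inr (Sum.inl ())) (Sum.inr (Sum.inr (Sum.inr j))) := by
    intro j; rw [hD, ds_adj]
    exact Or.inr (Or.inr (Or.inr (Or.inr (Or.inl ⟨j, rfl, rfl⟩))))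
  set S0 : Finset (Unit ⊕ Unit ⊕ Fin p ⊕ Fin p) :=
    insert (Sum.inl ()) (Finset.univ.image fun j : Fin p => Sum.inr (Sum.inr (Sum.inr j)))
    with hS0
  have hS0card : S0.card = p + 1 := by
    rw [hS0, Finset.card_insert_of_notMem (by simp),
      Finset.card_image_of_injective _ (fun a b hab => by simpa using hab)]
    simp [add_comm]
  have hS0vc : IsVC D S0 := by
    intro a b hab
    rw [hD, ds_adj] at hab
    rcases hab with ⟨rfl, -⟩ | ⟨rfl, -⟩ | ⟨i, rfl, -⟩ | ⟨i, rfl, -⟩ |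
      ⟨j, -, rfl⟩ | ⟨j, -, rfl⟩ <;> simp [hS0]
  have hS0is : IsIS D ↑S0 := by
    intro a ha b hb hne hadj
    rw [hS0] at ha hb
    simp only [Finset.coe_insert, Set.mem_insert_iff, Finset.coe_image,
      Set.mem_image, Finset.mem_coe, Finset.mem_univ] at ha hb
    rw [hD, ds_adj] at hadj
    rcases ha with rfl | ⟨j1, -, rfl⟩ <;> rcases hb with rfl | ⟨j2, -, rfl⟩ <;>
      rcases hadj with ⟨h1, h2⟩ | ⟨h1, h2⟩ | ⟨i, h1, h2⟩ | ⟨i, h1, h2⟩ |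
        ⟨j, h1, h2⟩ | ⟨j, h1, h2⟩ <;> simp_all
  have hle : ivc D ≤ p + 1 := Nat.sInf_le ⟨S0, hS0vc, hS0is, hS0card⟩
  have hne : {n | ∃ S, IsVC D S ∧ IsIS D ↑S ∧ S.card = n}.Nonempty :=
    ⟨_, S0, hS0vc, hS0is, hS0card⟩
  obtain ⟨S, hSvc, hSis, hScard⟩ := Nat.sInf_mem hne
  have hge : p + 1 ≤ ivc D := by
    rw [show ivc D = sInf {n | ∃ S, IsVC D S ∧ IsIS D ↑S ∧ S.card = n} from rfl, ← hScard]
    rcases hSvc adjXY with hX | hY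
    · have hYnot : Sum.inr (Sum.inl ()) ∉ S := by
        intro hY
        exact hSis (Finset.mem_coe.2 hX) (Finset.mem_coe.2 hY) (by simp) adjXY
      have hB : ∀ j : Fin p, Sum.inr (Sum.inr (Sum.inr j)) ∈ S := by
        intro j
        rcases hSvc (adjYB j) with h | h
        · exact absurd h hYnot
        · exact h
      have hsub : insert (Sum.inl ())
          (Finset.univ.image fun j : Fin p => Sum.inr (Sum.inr (Sum.inr j))) ⊆ S := by
        refine Finset.insert_subset hX ?_
        intro w hw
        simp only [Finset.mem_image, Finset.mem_univ, true_and] at hw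
        obtain ⟨j, rfl⟩ := hw
        exact hB j
      calc p + 1 = S0.card := hS0card.symm
        _ ≤ S.card := Finset.card_le_card hsub
    · have hXnot : Sum.inl () ∉ S := by
        intro hX
        exact hSis (Finset.mem_coe.2 hX) (Finset.mem_coe.2 hY) (by simp) adjXY
      have hA : ∀ i : Fin p, Sum.inr (Sum.inr (Sum.inl i)) ∈ S := by
        intro i
        rcases hSvc (adjXA i) with h | h
        · exact absurd h hXnot
        · exact h
      have hsub : insert (Sum.inr (Sum.inl ()))
          (Finset.univ.image fun i : Fin p => Sum.inr (Sum.inr (Sum.inl i))) ⊆ S := by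
        refine Finset.insert_subset hY ?_
        intro w hw
        simp only [Finset.mem_image, Finset.mem_univ, true_and] at hw
        obtain ⟨i, rfl⟩ := hw
        exact hA i
      have hc : (insert (Sum.inr (Sum.inl ()))
          (Finset.univ.image fun i : Fin p =>
            (Sum.inr (Sum.inr (Sum.inl i)) : Unit ⊕ Unit ⊕ Fin p ⊕ Fin p))).card = p + 1 := by
        rw [Finset.card_insert_of_notMem (by simp),
          Finset.card_image_of_injective _ (fun a b hab => by simpa using hab)]
        simp [add_comm]
      calc p + 1 = _ := hc.symm
        _ ≤ S.card := Finset.card_le_card hsub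
  omega

theorem stmt_9 (r : ℕ) (hr : 4 ≤ r) :
    (∀ {V : Type} [Fintype V] (G : SimpleGraph V),
        IsBip G → HFree (starG r) G →
          2 * ivc G + 2 ≤ r * vc G ∨ ivc G = vc G) ∧
      (HFree (starG r) (doubleStar (r - 2) (r - 2)) ∧
        IsBip (doubleStar (r - 2) (r - 2)) ∧
        vc (doubleStar (r - 2) (r - 2)) = 2 ∧
        ivc (doubleStar (r - 2) (r - 2)) = r - 1) := by
  refine ⟨fun {V} _ G hbip hfree => part1 r hr G hbip hfree,
    ds_free r (r - 2) (by omega), ds_bip _ _, ds_vc _ (by omega), ?_⟩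
  rw [ds_ivc]
  omega
end
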